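/- Let H be a group with finite symmetric generating set S whose word metric is δ-hyperbolic. There exists a constant C ≥ 0, depending only on H, S and δ, such that for every h ∈ H the following holds: if u, c ∈ H are such that h = c⁻¹uc, u is a conjugacy minimal element of the conjugacy class of h, and |c| is minimal among word lengths of all elements conjugating h to some conjugacy minimal element of its conjugacy class, then the concatenation of discrete geodesics from c to 1, from 1 to u, and from u to uc is a (1,C)-quasigeodesic in the word metric. -/

import Mathlib

open Set

/-- The word length of `h` with respect to the generating set `S`: the least `n` such
that `h` is a product of `n` elements of `S`. -/
noncomputable def wordLength {H : Type*} [Group H] (S : Set H) (h : H) : ℕ :=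
  sInf {n | ∃ l : List H, l.length = n ∧ (∀ x ∈ l, x ∈ S) ∧ l.prod = h}

/-- The word metric: `d(a,b) = |a⁻¹ b|`. -/
noncomputable def wordDist {H : Type*} [Group H] (S : Set H) (a b : H) : ℕ :=
  wordLength S (a⁻¹ * b)

/-- `g : {0,…,n} → H` is a discrete geodesic (of length `n`) in the word metric:
`d(g i, g j) = |i − j|` for all `i, j ≤ n`. -/
def IsDiscreteGeodesic {H : Type*} [Group H] (S : Set H) (g : ℕ → H) (n : ℕ) : Prop :=
  ∀ i j : ℕ, i ≤ j → j ≤ n → wordDist S (g i) (g j) = j - i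

/-- The Gromov product `(x,y)_z = ½(d(x,z) + d(y,z) − d(x,y))` in the word metric. -/
noncomputable def gromovProd {H : Type*} [Group H] (S : Set H) (x y z : H) : ℝ :=
  ((wordDist S x z : ℝ) + (wordDist S y z : ℝ) - (wordDist S x y : ℝ)) / 2

/-- The word metric of `(H,S)` is `δ`-hyperbolic: geodesic triangles in the Cayley graph
are `δ`-thin, i.e. for any `x, y, z`, any discrete geodesics `f` from `z` to `x` and `g`
from `z` to `y`, and any `i` with `i ≤ (x,y)_z`, one has `d(f i, g i) ≤ δ`. -/
def WordHyperbolic {H : Type*} [Group H] (S : Set H) (δ : ℝ) : Prop :=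
  ∀ (x y z : H) (f g : ℕ → H),
    f 0 = z → f (wordDist S z x) = x → IsDiscreteGeodesic S f (wordDist S z x) →
    g 0 = z → g (wordDist S z y) = y → IsDiscreteGeodesic S g (wordDist S z y) →
    ∀ i : ℕ, i ≤ wordDist S z x → i ≤ wordDist S z y →
      (i : ℝ) ≤ gromovProd S x y z →
      (wordDist S (f i) (g i) : ℝ) ≤ δ

/-- `h` is `κ`-almost conjugacy minimal: `|h| ≤ |h'| + κ` for every conjugate `h'` of
`h` in `H`. -/
def AlmostConjMin {H : Type*} [Group H] (S : Set H) (κ : ℝ) (h : H) : Prop :=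
  ∀ g : H, (wordLength S h : ℝ) ≤ (wordLength S (g⁻¹ * h * g) : ℝ) + κ

/-- `h` is conjugacy minimal: `|h| ≤ |h'|` for every conjugate `h'` of `h` in `H`. -/
def ConjMin {H : Type*} [Group H] (S : Set H) (h : H) : Prop :=
  ∀ g : H, wordLength S h ≤ wordLength S (g⁻¹ * h * g)

/-!
Minimality of `|c|` forces `(c, u)_1 ≤ δ + 1`: otherwise the point `x` of `[1, u]` at distance
`i > δ` from `1` is `δ`-close to `[1, c]`, `x⁻¹ u x` is again conjugacy minimal, and `x⁻¹ c`
is a shorter conjugator. Applied to `u⁻¹` this gives `|u c| ≥ |u| + |c| - 2δ - 2`, and it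
remains to bound `(c, u c)_1`. If `u` is long, `(u, u c)_1` is large and the same shortcut argument,
now through `[1, u c]`, bounds `(c, u c)_1`. If `u` is short, a point `w` of `[1, c]` on the
common part of `[1, c]` and `[1, u c]` is moved by `u` only boundedly, so `w⁻¹ u w` lies in a
fixed finite ball, where conjugacy minimal conjugates are reached by conjugators of bounded
length; this gives a conjugator shorter than `c` unless `|w|` is bounded. Hence
`d(c, u c) = |c| + |u c| - 2 (c, u c)_1 ≥ 2|c| + |u| - C`, and a path of length `L` whose
endpoints are at distance at least `L - C` is a `(1, C)`-quasigeodesic.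
-/

section

variable {H : Type*} [Group H] {S : Set H} {δ : ℝ}

structure IsSymmGenSet (S : Set H) : Prop where
  inv_mem : ∀ s ∈ S, s⁻¹ ∈ S
  closure_eq : Subgroup.closure S = ⊤

theorem wordLength_prod_le {l : List H} (hl : ∀ x ∈ l, x ∈ S) :
    wordLength S l.prod ≤ l.length :=
  Nat.sInf_le ⟨l, rfl, hl, rfl⟩

@[simp]
theorem wordLength_one : wordLength S (1 : H) = 0 :=
  Nat.le_zero.mp (wordLength_prod_le (l := []) (by simp))

@[simp]
theorem wordDist_one_left (a : H) : wordDist S 1 a = wordLength S a := by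
  simp [wordDist]

@[simp]
theorem wordDist_mul_left (x a b : H) : wordDist S (x * a) (x * b) = wordDist S a b := by
  simp [wordDist, mul_assoc]

@[simp]
theorem wordDist_self_mul (a b : H) : wordDist S a (a * b) = wordLength S b := by
  simp [wordDist]

namespace IsSymmGenSet

theorem exists_list (hS : IsSymmGenSet S) (h : H) :
    ∃ l : List H, (∀ x ∈ l, x ∈ S) ∧ l.prod = h ∧ l.length = wordLength S h := by
  have hmem : h ∈ Submonoid.closure S := by
    have : S⁻¹ ⊆ S := fun s hs => by simpa using hS.inv_mem _ hs
    rw [← union_eq_left.mpr this, ← Subgroup.closure_toSubmonoid, hS.closure_eq]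
    trivial
  obtain ⟨l, hl, rfl⟩ := Submonoid.exists_list_of_mem_closure hmem
  obtain ⟨l', hl', hprod, hlen⟩ := Nat.sInf_mem (s := {n | ∃ l' : List H, l'.length = n ∧
    (∀ x ∈ l', x ∈ S) ∧ l'.prod = l.prod}) ⟨_, l, rfl, hl, rfl⟩
  exact ⟨l', hprod, hlen, hl'⟩

theorem wordLength_mul_le (hS : IsSymmGenSet S) (a b : H) :
    wordLength S (a * b) ≤ wordLength S a + wordLength S b := by
  obtain ⟨la, hSa, rfl, hla⟩ := hS.exists_list a
  obtain ⟨lb, hSb, rfl, hlb⟩ := hS.exists_list b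
  rw [← hla, ← hlb, ← List.length_append, ← List.prod_append]
  exact wordLength_prod_le fun x hx => (List.mem_append.mp hx).elim (hSa x) (hSb x)

theorem wordLength_inv (hS : IsSymmGenSet S) (a : H) : wordLength S a⁻¹ = wordLength S a := by
  have key (b : H) : wordLength S b⁻¹ ≤ wordLength S b := by
    obtain ⟨l, hSl, rfl, hl⟩ := hS.exists_list b
    rw [← hl, List.prod_inv_reverse, ← List.length_map (f := fun x => x⁻¹),
      ← List.length_reverse]
    exact wordLength_prod_le fun x hx => by
      obtain ⟨y, hy, rfl⟩ := List.mem_map.mp (List.mem_reverse.mp hx)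
      exact hS.inv_mem y (hSl y hy)
  exact le_antisymm (key a) (by simpa using key a⁻¹)

theorem wordDist_comm (hS : IsSymmGenSet S) (a b : H) : wordDist S a b = wordDist S b a := by
  rw [wordDist, ← hS.wordLength_inv, mul_inv_rev, inv_inv, wordDist]

theorem wordDist_one_right (hS : IsSymmGenSet S) (a : H) : wordDist S a 1 = wordLength S a := by
  rw [hS.wordDist_comm, wordDist_one_left]

theorem wordDist_triangle (hS : IsSymmGenSet S) (a b c : H) :
    wordDist S a c ≤ wordDist S a b + wordDist S b c := by
  simpa [wordDist, mul_assoc] using hS.wordLength_mul_le (a⁻¹ * b) (b⁻¹ * c)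

theorem gromovProd_nonneg (hS : IsSymmGenSet S) (x y z : H) : 0 ≤ gromovProd S x y z := by
  have : (wordDist S x y : ℝ) ≤ wordDist S x z + wordDist S z y := by
    exact_mod_cast hS.wordDist_triangle x z y
  rw [hS.wordDist_comm z y] at this
  rw [gromovProd]
  linarith

theorem gromovProd_le_left (hS : IsSymmGenSet S) (x y z : H) :
    gromovProd S x y z ≤ wordDist S z x := by
  have : (wordDist S y z : ℝ) ≤ wordDist S y x + wordDist S x z := by
    exact_mod_cast hS.wordDist_triangle y x z
  rw [hS.wordDist_comm y x] at this
  rw [gromovProd, hS.wordDist_comm z x]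
  linarith

theorem gromovProd_le_right (hS : IsSymmGenSet S) (x y z : H) :
    gromovProd S x y z ≤ wordDist S z y := by
  have : (wordDist S x z : ℝ) ≤ wordDist S x y + wordDist S y z := by
    exact_mod_cast hS.wordDist_triangle x y z
  rw [gromovProd, hS.wordDist_comm z y]
  linarith

end IsSymmGenSet

def IsPathOn (S : Set H) (p : ℕ → H) (a b : ℕ) : Prop :=
  ∀ i j : ℕ, a ≤ i → i ≤ j → j ≤ b → wordDist S (p i) (p j) ≤ j - i

section pathConcat

variable {α : Type*} {g₁ g₂ : ℕ → α} {n : ℕ}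

def pathConcat (g₁ : ℕ → α) (n : ℕ) (g₂ : ℕ → α) (i : ℕ) : α :=
  if i ≤ n then g₁ i else g₂ (i - n)

@[simp]
theorem pathConcat_zero : pathConcat g₁ n g₂ 0 = g₁ 0 := by
  simp [pathConcat]

theorem pathConcat_of_le {i : ℕ} (hi : i ≤ n) : pathConcat g₁ n g₂ i = g₁ i :=
  if_pos hi

theorem pathConcat_of_ge (h : g₁ n = g₂ 0) {i : ℕ} (hi : n ≤ i) :
    pathConcat g₁ n g₂ i = g₂ (i - n) := by
  rcases hi.eq_or_lt with rfl | hi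
  · simp [pathConcat, h]
  · exact if_neg hi.not_ge

theorem pathConcat_add (h : g₁ n = g₂ 0) (m : ℕ) :
    pathConcat g₁ n g₂ (n + m) = g₂ m := by
  simp [pathConcat_of_ge h (Nat.le_add_right n m)]

end pathConcat

namespace IsPathOn

variable {p : ℕ → H} {a b e : ℕ}

theorem trans (hS : IsSymmGenSet S) (h₁ : IsPathOn S p a b) (h₂ : IsPathOn S p b e) :
    IsPathOn S p a e := by
  intro i j hai hij hje
  rcases le_total j b with hjb | hbj
  · exact h₁ i j hai hij hjb
  rcases le_total i b with hib | hbi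
  · have := hS.wordDist_triangle (p i) (p b) (p j)
    have := h₁ i b hai hib le_rfl
    have := h₂ b j le_rfl hbj hje
    omega
  · exact h₂ i j hbi hij hje

theorem shift {q : ℕ → H} {m : ℕ} (hq : IsPathOn S q 0 m)
    (hp : ∀ i, a ≤ i → i ≤ a + m → p i = q (i - a)) : IsPathOn S p a (a + m) := by
  intro i j hai hij hj
  rw [hp i hai (hij.trans hj), hp j (hai.trans hij) hj]
  exact (hq _ _ (Nat.zero_le _) (by omega) (by omega)).trans_eq (by omega)

theorem pathConcat (hS : IsSymmGenSet S) {g₁ g₂ : ℕ → H} {n m : ℕ}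
    (h₁ : IsPathOn S g₁ 0 n) (h₂ : IsPathOn S g₂ 0 m) (h : g₁ n = g₂ 0) :
    IsPathOn S (pathConcat g₁ n g₂) 0 (n + m) :=
  trans hS
    (zero_add n ▸ h₁.shift fun _ _ hi => by rw [pathConcat_of_le (by omega), Nat.sub_zero])
    (h₂.shift fun _ hi _ => pathConcat_of_ge h hi)

theorem sub_le_wordDist_add (hS : IsSymmGenSet S) {L : ℕ} {K : ℝ} (hp : IsPathOn S p 0 L)
    (hL : (L : ℝ) ≤ wordDist S (p 0) (p L) + K) {i j : ℕ} (hij : i ≤ j) (hjL : j ≤ L) :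
    (j : ℝ) - i ≤ wordDist S (p i) (p j) + K := by
  have htri : wordDist S (p 0) (p L) ≤ i + wordDist S (p i) (p j) + (L - j) := by
    have := hS.wordDist_triangle (p 0) (p i) (p L)
    have := hS.wordDist_triangle (p i) (p j) (p L)
    have := hp 0 i le_rfl i.zero_le (hij.trans hjL)
    have := hp j L j.zero_le hjL le_rfl
    omega
  have := (Nat.cast_le (α := ℝ)).mpr htri
  push_cast [Nat.cast_sub hjL] at this
  linarith

theorem isDiscreteGeodesic (hS : IsSymmGenSet S) {n : ℕ} (hp : IsPathOn S p 0 n)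
    (hn : n ≤ wordDist S (p 0) (p n)) : IsDiscreteGeodesic S p n := by
  intro i j hij hj
  have hge := hp.sub_le_wordDist_add hS (K := 0) (by exact_mod_cast hn) hij hj
  rw [add_zero, sub_le_iff_le_add, ← Nat.cast_add, Nat.cast_le] at hge
  have := hp i j i.zero_le hij hj
  omega

end IsPathOn

theorem IsDiscreteGeodesic.isPathOn {g : ℕ → H} {n : ℕ} (hg : IsDiscreteGeodesic S g n) :
    IsPathOn S g 0 n :=
  fun i j _ hij hj => (hg i j hij hj).le

def IsGeodesicBetween (S : Set H) (g : ℕ → H) (a b : H) : Prop :=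
  g 0 = a ∧ g (wordDist S a b) = b ∧ IsDiscreteGeodesic S g (wordDist S a b)

namespace IsGeodesicBetween

variable {g : ℕ → H} {a b : H} {i : ℕ}

theorem wordDist_start (hg : IsGeodesicBetween S g a b) (hi : i ≤ wordDist S a b) :
    wordDist S a (g i) = i := by
  simpa [hg.1] using hg.2.2 0 i i.zero_le hi

theorem wordDist_end (hg : IsGeodesicBetween S g a b) (hi : i ≤ wordDist S a b) :
    wordDist S (g i) b = wordDist S a b - i := by
  simpa [hg.2.1] using hg.2.2 i _ hi le_rfl

theorem wordDist_eq (hS : IsSymmGenSet S) (hg : IsGeodesicBetween S g a b) {j : ℕ}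
    (hi : i ≤ wordDist S a b) (hj : j ≤ wordDist S a b) :
    wordDist S (g i) (g j) = i - j + (j - i) := by
  rcases le_total i j with h | h
  · rw [hg.2.2 i j h hj]; omega
  · rw [hS.wordDist_comm, hg.2.2 j i h hi]; omega

theorem reverse (hS : IsSymmGenSet S) (hg : IsGeodesicBetween S g a b) :
    IsGeodesicBetween S (fun t => g (wordDist S a b - t)) b a := by
  rw [IsGeodesicBetween, hS.wordDist_comm b a]
  refine ⟨by simpa using hg.2.1, by simpa using hg.1, fun i j hij hj => ?_⟩
  rw [hS.wordDist_comm, hg.2.2 _ _ (by omega) (by omega)]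
  omega

theorem mul_left (x : H) (hg : IsGeodesicBetween S g a b) :
    IsGeodesicBetween S (fun t => x * g t) (x * a) (x * b) := by
  simp only [IsGeodesicBetween, IsDiscreteGeodesic, wordDist_mul_left]
  exact ⟨by rw [hg.1], by rw [hg.2.1], hg.2.2⟩

end IsGeodesicBetween

theorem IsSymmGenSet.exists_isGeodesicBetween (hS : IsSymmGenSet S) (a b : H) :
    ∃ g : ℕ → H, IsGeodesicBetween S g a b := by
  obtain ⟨l, hSl, hprod, hlen⟩ := hS.exists_list (a⁻¹ * b)
  have hend : a * (l.take l.length).prod = b := by simp [hprod]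
  have hpath : IsPathOn S (fun i => a * (l.take i).prod) 0 l.length := by
    intro i j _ hij _
    obtain ⟨k, rfl⟩ := Nat.exists_eq_add_of_le hij
    simp only [List.take_add, List.prod_append, ← mul_assoc]
    simp only [wordDist, inv_mul_cancel_left, add_tsub_cancel_left]
    refine (wordLength_prod_le fun x hx => hSl x ?_).trans (List.length_take_le _ _)
    exact List.mem_of_mem_drop (List.mem_of_mem_take hx)
  have hd : wordDist S a b = l.length := hlen.symm
  refine ⟨fun i => a * (l.take i).prod, by simp, ?_, ?_⟩ <;> rw [hd]
  · exact hend
  · exact hpath.isDiscreteGeodesic hS (by simp only [hend]; simp [hd])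

theorem le_add_one_of_forall_natCast_le {t K : ℝ} (ht : 0 ≤ t)
    (h : ∀ i : ℕ, (i : ℝ) ≤ t → (i : ℝ) ≤ K) : t ≤ K + 1 := by
  have := h _ (Nat.floor_le ht)
  linarith [Nat.lt_floor_add_one t]

theorem IsSymmGenSet.le_wordDist_left_of_le_gromovProd (hS : IsSymmGenSet S) {x y z : H}
    {i : ℕ} (hi : (i : ℝ) ≤ gromovProd S x y z) : i ≤ wordDist S z x := by
  exact_mod_cast hi.trans (hS.gromovProd_le_left x y z)

theorem IsSymmGenSet.le_wordDist_right_of_le_gromovProd (hS : IsSymmGenSet S) {x y z : H}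
    {i : ℕ} (hi : (i : ℝ) ≤ gromovProd S x y z) : i ≤ wordDist S z y := by
  exact_mod_cast hi.trans (hS.gromovProd_le_right x y z)

theorem WordHyperbolic.wordDist_le (hhyp : WordHyperbolic S δ) (hS : IsSymmGenSet S)
    {f g : ℕ → H} {x y z : H} (hf : IsGeodesicBetween S f z x) (hg : IsGeodesicBetween S g z y)
    {i : ℕ} (hi : (i : ℝ) ≤ gromovProd S x y z) : (wordDist S (f i) (g i) : ℝ) ≤ δ :=
  hhyp x y z f g hf.1 hf.2.1 hf.2.2 hg.1 hg.2.1 hg.2.2 i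
    (hS.le_wordDist_left_of_le_gromovProd hi) (hS.le_wordDist_right_of_le_gromovProd hi) hi

theorem ConjMin.conj_of_wordLength_le {u x : H} (hu : ConjMin S u)
    (h : wordLength S (x⁻¹ * u * x) ≤ wordLength S u) : ConjMin S (x⁻¹ * u * x) :=
  fun g => by simpa [mul_assoc] using h.trans (hu (x * g))

theorem ConjMin.inv (hS : IsSymmGenSet S) {u : H} (hu : ConjMin S u) : ConjMin S u⁻¹ := by
  intro g
  rw [show g⁻¹ * u⁻¹ * g = (g⁻¹ * u * g)⁻¹ by group, hS.wordLength_inv,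
    hS.wordLength_inv]
  exact hu g

theorem exists_conjMin_conj (v : H) : ∃ m w : H, ConjMin S w ∧ v = m⁻¹ * w * m := by
  obtain ⟨g₀, hg₀⟩ :
      ∃ g₀ : H, ∀ g, wordLength S (g₀⁻¹ * v * g₀) ≤ wordLength S (g⁻¹ * v * g) :=
    ⟨_, fun g => Function.argmin_le (fun g => wordLength S (g⁻¹ * v * g)) g⟩
  refine ⟨g₀⁻¹, g₀⁻¹ * v * g₀, fun g => ?_, by group⟩
  simpa [mul_assoc] using hg₀ (g₀ * g)

theorem IsSymmGenSet.finite_setOf_wordLength_le (hS : IsSymmGenSet S) (hSfin : S.Finite)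
    (n : ℕ) : {v : H | wordLength S v ≤ n}.Finite := by
  have : Finite S := hSfin.to_subtype
  refine ((List.finite_length_le S n).image fun l => (l.map (↑)).prod).subset fun v hv => ?_
  obtain ⟨l, hSl, rfl, hl⟩ := hS.exists_list v
  lift l to List S using hSl
  rw [List.length_map] at hl
  exact ⟨l, hl.trans_le hv, rfl⟩

def HasShortMinConjugators (S : Set H) (B : ℝ) (M : ℕ) : Prop :=
  ∀ v : H, (wordLength S v : ℝ) ≤ B →
    ∃ m w : H, ConjMin S w ∧ v = m⁻¹ * w * m ∧ wordLength S m ≤ M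

theorem IsSymmGenSet.exists_hasShortMinConjugators (hS : IsSymmGenSet S) (hSfin : S.Finite)
    (B : ℝ) : ∃ M : ℕ, HasShortMinConjugators S B M := by
  choose m w hw hv using exists_conjMin_conj (S := S)
  obtain ⟨M, hM⟩ :=
    ((hS.finite_setOf_wordLength_le hSfin ⌈B⌉₊).image fun v => wordLength S (m v)).bddAbove
  exact ⟨M, fun v hvB => ⟨m v, w v, hw v, hv v,
    hM ⟨v, by exact_mod_cast hvB.trans (Nat.le_ceil B), rfl⟩⟩⟩

def IsMinConjugator (S : Set H) (u c : H) : Prop :=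
  ∀ c' u' : H, c⁻¹ * u * c = c'⁻¹ * u' * c' → ConjMin S u' →
    wordLength S c ≤ wordLength S c'

namespace IsMinConjugator

variable {u c : H}

theorem wordLength_le_add (hS : IsSymmGenSet S) (hc : IsMinConjugator S u c) {x m w : H}
    (hw : ConjMin S w) (h : x⁻¹ * u * x = m⁻¹ * w * m) :
    wordLength S c ≤ wordLength S m + wordDist S x c := by
  refine (hc (m * (x⁻¹ * c)) w ?_ hw).trans (hS.wordLength_mul_le _ _)
  rw [show u = x * (m⁻¹ * w * m) * x⁻¹ by rw [← h]; group]
  group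

theorem inv (hS : IsSymmGenSet S) (hc : IsMinConjugator S u c) : IsMinConjugator S u⁻¹ c :=
  fun c' u' h hu' => hc c' u'⁻¹ (by
    calc c⁻¹ * u * c = (c⁻¹ * u⁻¹ * c)⁻¹ := by group
      _ = c'⁻¹ * u'⁻¹ * c' := by rw [h]; group) (hu'.inv hS)

theorem le_wordDist (hS : IsSymmGenSet S) (hu : ConjMin S u) (hc : IsMinConjugator S u c)
    {γ μ : ℕ → H} (hγ : IsGeodesicBetween S γ 1 c) (hμ : IsGeodesicBetween S μ 1 u)
    {i : ℕ} (hic : i ≤ wordLength S c) (hiu : i ≤ wordLength S u) :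
    i ≤ wordDist S (μ i) (γ i) := by
  have hx : wordLength S (μ i) = i := by simpa using hμ.wordDist_start (by simpa using hiu)
  have hxu : wordDist S (μ i) u = wordLength S u - i := by
    simpa using hμ.wordDist_end (by simpa using hiu)
  have hγc : wordDist S (γ i) c = wordLength S c - i := by
    simpa using hγ.wordDist_end (by simpa using hic)
  have hconj : ConjMin S ((μ i)⁻¹ * u * μ i) := hu.conj_of_wordLength_le <| by
    have := hS.wordLength_mul_le ((μ i)⁻¹ * u) (μ i)
    rw [wordDist] at hxu
    omega
  have := hc.wordLength_le_add hS hconj (x := μ i) (m := 1) (by group)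
  have := hS.wordDist_triangle (μ i) (γ i) c
  rw [wordLength_one] at *
  omega

theorem gromovProd_le (hS : IsSymmGenSet S) (hhyp : WordHyperbolic S δ) (hu : ConjMin S u)
    (hc : IsMinConjugator S u c) : gromovProd S c u 1 ≤ δ + 1 := by
  obtain ⟨γ, hγ⟩ := hS.exists_isGeodesicBetween 1 c
  obtain ⟨μ, hμ⟩ := hS.exists_isGeodesicBetween 1 u
  refine le_add_one_of_forall_natCast_le (hS.gromovProd_nonneg _ _ _) fun i hi => ?_
  have hle := hc.le_wordDist hS hu hγ hμ (by simpa using hS.le_wordDist_left_of_le_gromovProd hi)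
    (by simpa using hS.le_wordDist_right_of_le_gromovProd hi)
  rw [hS.wordDist_comm] at hle
  exact (Nat.cast_le.mpr hle).trans (hhyp.wordDist_le hS hγ hμ hi)

theorem wordLength_add_le (hS : IsSymmGenSet S) (hhyp : WordHyperbolic S δ) (hu : ConjMin S u)
    (hc : IsMinConjugator S u c) :
    (wordLength S u + wordLength S c : ℝ) ≤ wordLength S (u * c) + 2 * δ + 2 := by
  have := (hc.inv hS).gromovProd_le hS hhyp (hu.inv hS)
  rw [gromovProd, hS.wordDist_one_right, hS.wordDist_one_right, wordDist, ← mul_inv_rev,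
    hS.wordLength_inv, hS.wordLength_inv] at this
  linarith

end IsMinConjugator

theorem WordHyperbolic.wordDist_mul_self_le (hhyp : WordHyperbolic S δ) (hS : IsSymmGenSet S)
    {u c : H} {γ : ℕ → H} (hγ : IsGeodesicBetween S γ 1 c) {i : ℕ}
    (hi : (i : ℝ) ≤ gromovProd S c (u * c) 1) (hlt : gromovProd S u (u * c) 1 < i) :
    (wordDist S (γ i) (u * γ i) : ℝ) ≤ wordLength S u + 2 * δ := by
  obtain ⟨η, hη⟩ := hS.exists_isGeodesicBetween 1 (u * c)
  have hθ : IsGeodesicBetween S (fun t => u * γ (wordDist S 1 c - t)) (u * c) u := by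
    simpa only [mul_one] using (hγ.reverse hS).mul_left u
  have hin := hS.le_wordDist_left_of_le_gromovProd hi
  have hiN := hS.le_wordDist_right_of_le_gromovProd hi
  have hside : wordDist S u (u * c) = wordDist S 1 c := by simp
  have htri₁ := hS.wordDist_triangle 1 u (u * c)
  have htri₂ := hS.wordDist_triangle u 1 (u * c)
  rw [hside] at htri₁ htri₂
  rw [hS.wordDist_comm u 1] at htri₂
  rw [gromovProd, hS.wordDist_comm u 1, hS.wordDist_comm (u * c) 1, hside] at hlt
  have hgp : gromovProd S 1 u (u * c) =
      ((wordDist S 1 (u * c) : ℝ) + wordDist S 1 c - wordDist S 1 u) / 2 := by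
    rw [gromovProd, hside]
  -- the point of `[u, u * c]` facing `η i` in the triangle `(1, u, u * c)`
  have hk : ((wordDist S 1 (u * c) - i : ℕ) : ℝ) ≤ gromovProd S 1 u (u * c) := by
    rw [hgp, Nat.cast_sub hiN]
    linarith
  have hthin₁ := hhyp.wordDist_le hS hγ hη hi
  have hthin₂ := hhyp.wordDist_le hS (hη.reverse hS) hθ hk
  rw [show wordDist S 1 (u * c) - (wordDist S 1 (u * c) - i) = i by omega] at hthin₂
  set j := wordDist S 1 c - (wordDist S 1 (u * c) - i)
  have hγγ : wordDist S (γ j) (γ i) ≤ wordDist S 1 u := by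
    rw [hγ.wordDist_eq hS (Nat.sub_le _ _) hin]
    omega
  have h₁ := hS.wordDist_triangle (γ i) (η i) (u * γ i)
  have h₂ := hS.wordDist_triangle (η i) (u * γ j) (u * γ i)
  rw [wordDist_mul_left] at h₂
  have : (wordDist S (γ i) (u * γ i) : ℝ) ≤
      wordDist S (γ i) (η i) + wordDist S (η i) (u * γ j) + wordDist S 1 u := by
    exact_mod_cast (by omega : wordDist S (γ i) (u * γ i) ≤ _)
  rw [← wordDist_one_left]
  linarith

namespace IsMinConjugator

variable {u c : H}

theorem le_two_mul_of_le_gromovProd (hS : IsSymmGenSet S) (hhyp : WordHyperbolic S δ)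
    (hu : ConjMin S u) (hc : IsMinConjugator S u c) {i : ℕ}
    (hic : (i : ℝ) ≤ gromovProd S c (u * c) 1) (hiu : (i : ℝ) ≤ gromovProd S u (u * c) 1) :
    (i : ℝ) ≤ 2 * δ := by
  obtain ⟨γ, hγ⟩ := hS.exists_isGeodesicBetween 1 c
  obtain ⟨μ, hμ⟩ := hS.exists_isGeodesicBetween 1 u
  obtain ⟨η, hη⟩ := hS.exists_isGeodesicBetween 1 (u * c)
  have hle := hc.le_wordDist hS hu hγ hμ (by simpa using hS.le_wordDist_left_of_le_gromovProd hic)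
    (by simpa using hS.le_wordDist_left_of_le_gromovProd hiu)
  have htri := (hle.trans (hS.wordDist_triangle (μ i) (η i) (γ i))).trans_eq
    (congrArg _ (hS.wordDist_comm (η i) (γ i)))
  have := hhyp.wordDist_le hS hγ hη hic
  have := hhyp.wordDist_le hS hμ hη hiu
  have := (Nat.cast_le (α := ℝ)).mpr htri
  push_cast at this
  linarith

theorem gromovProd_mul_le_of_bound (hS : IsSymmGenSet S) (hhyp : WordHyperbolic S δ)
    (hδ : 0 ≤ δ) (hu : ConjMin S u) (hc : IsMinConjugator S u c) {M : ℕ}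
    (hM : HasShortMinConjugators S (wordLength S u + 2 * δ) M) :
    gromovProd S c (u * c) 1 ≤ M + 2 * δ + 1 := by
  obtain ⟨γ, hγ⟩ := hS.exists_isGeodesicBetween 1 c
  refine le_add_one_of_forall_natCast_le (hS.gromovProd_nonneg _ _ _) fun i hi => ?_
  rcases le_or_gt (i : ℝ) (gromovProd S u (u * c) 1) with hiu | hiu
  · linarith [hc.le_two_mul_of_le_gromovProd hS hhyp hu hi hiu, M.cast_nonneg (α := ℝ)]
  obtain ⟨m, w, hw, hv, hm⟩ := hM ((γ i)⁻¹ * u * γ i) (by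
    simpa [wordDist, mul_assoc] using hhyp.wordDist_mul_self_le hS hγ hi hiu)
  have hshort := hc.wordLength_le_add hS hw hv
  have hic : i ≤ wordLength S c := by simpa using hS.le_wordDist_left_of_le_gromovProd hi
  have hγc : wordDist S (γ i) c = wordLength S c - i := by
    simpa using hγ.wordDist_end (by simpa using hic)
  rw [hγc] at hshort
  have : i ≤ M := by omega
  have : (i : ℝ) ≤ M := by exact_mod_cast this
  linarith

theorem gromovProd_mul_le (hS : IsSymmGenSet S) (hhyp : WordHyperbolic S δ) (hδ : 0 ≤ δ)
    (hu : ConjMin S u) (hc : IsMinConjugator S u c) {M : ℕ}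
    (hM : HasShortMinConjugators S (5 * δ + 2) M) :
    gromovProd S c (u * c) 1 ≤ M + 2 * δ + 1 := by
  rcases le_or_gt (wordLength S u : ℝ) (3 * δ + 2) with hsmall | hlarge
  · exact hc.gromovProd_mul_le_of_bound hS hhyp hδ hu fun v hv => hM v (by linarith)
  have hgp : (wordLength S u : ℝ) - δ - 1 ≤ gromovProd S u (u * c) 1 := by
    have := hc.wordLength_add_le hS hhyp hu
    rw [gromovProd, hS.wordDist_one_right, hS.wordDist_one_right, wordDist_self_mul]
    linarith
  have hmin : min (gromovProd S c (u * c) 1) (gromovProd S u (u * c) 1) ≤ 2 * δ + 1 :=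
    le_add_one_of_forall_natCast_le (le_min (hS.gromovProd_nonneg ..) (hS.gromovProd_nonneg ..))
      fun i hi => hc.le_two_mul_of_le_gromovProd hS hhyp hu (hi.trans (min_le_left ..))
        (hi.trans (min_le_right ..))
  rcases min_le_iff.mp hmin with h | h
  · linarith [M.cast_nonneg (α := ℝ)]
  · linarith

theorem two_mul_wordLength_add_le (hS : IsSymmGenSet S) (hhyp : WordHyperbolic S δ)
    (hδ : 0 ≤ δ) (hu : ConjMin S u) (hc : IsMinConjugator S u c) {M : ℕ}
    (hM : HasShortMinConjugators S (5 * δ + 2) M) :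
    (2 * wordLength S c + wordLength S u : ℝ) ≤
      wordLength S (c⁻¹ * u * c) + (2 * M + 6 * δ + 4) := by
  have h₁ := hc.gromovProd_mul_le hS hhyp hδ hu hM
  have h₂ := hc.wordLength_add_le hS hhyp hu
  rw [gromovProd, hS.wordDist_one_right, hS.wordDist_one_right, wordDist, ← mul_assoc] at h₁
  linarith

end IsMinConjugator

end

/-- Let `H` be a group with finite symmetric generating set `S` whose
word metric is `δ`-hyperbolic. There is a constant `C ≥ 0`, depending only on `H`, `S`,
`δ`, such that for all `h, u, c ∈ H` with `h = c⁻¹uc`, `u` conjugacy minimal in the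
conjugacy class of `h`, and `|c|` minimal among lengths of elements conjugating `h` to a
conjugacy minimal element of its class, the concatenation of discrete geodesics from `c`
to `1`, from `1` to `u`, and from `u` to `uc` is a `(1,C)`-quasigeodesic. -/
theorem stmt5 {H : Type*} [Group H] (S : Set H) (δ : ℝ)
    (hSfin : S.Finite) (hSsym : ∀ s ∈ S, s⁻¹ ∈ S) (hSgen : Subgroup.closure S = ⊤)
    (hδ : 0 ≤ δ) (hhyp : WordHyperbolic S δ) :
    ∃ C : ℝ, 0 ≤ C ∧
      ∀ h u c : H, h = c⁻¹ * u * c → ConjMin S u →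
        (∀ c' u' : H, h = c'⁻¹ * u' * c' → ConjMin S u' →
          wordLength S c ≤ wordLength S c') →
        ∀ g₁ g₂ g₃ : ℕ → H,
          g₁ 0 = c → g₁ (wordDist S c 1) = 1 →
            IsDiscreteGeodesic S g₁ (wordDist S c 1) →
          g₂ 0 = 1 → g₂ (wordDist S 1 u) = u →
            IsDiscreteGeodesic S g₂ (wordDist S 1 u) →
          g₃ 0 = u → g₃ (wordDist S u (u * c)) = u * c →
            IsDiscreteGeodesic S g₃ (wordDist S u (u * c)) →
          ∀ p : ℕ → H,
            (∀ i : ℕ, p i =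
              if i ≤ wordDist S c 1 then g₁ i
              else if i ≤ wordDist S c 1 + wordDist S 1 u then g₂ (i - wordDist S c 1)
              else g₃ (i - wordDist S c 1 - wordDist S 1 u)) →
            ∀ i j : ℕ, i ≤ j →
              j ≤ wordDist S c 1 + wordDist S 1 u + wordDist S u (u * c) →
              (j : ℝ) - (i : ℝ) ≤ (wordDist S (p i) (p j) : ℝ) + C := by
  have hS : IsSymmGenSet S := ⟨hSsym, hSgen⟩
  obtain ⟨M, hM⟩ := hS.exists_hasShortMinConjugators hSfin (5 * δ + 2)
  refine ⟨2 * M + 6 * δ + 4, by linarith [M.cast_nonneg (α := ℝ)], ?_⟩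
  rintro h u c rfl hu (hc : IsMinConjugator S u c) g₁ g₂ g₃ h₁0 h₁n h₁ h₂0 h₂n h₂ h₃0
    h₃n h₃ p hp i j hij hj
  have hp' : p = pathConcat (pathConcat g₁ (wordDist S c 1) g₂)
      (wordDist S c 1 + wordDist S 1 u) g₃ := by
    funext k
    rw [hp, pathConcat, pathConcat, Nat.sub_sub]
    split_ifs <;> first | rfl | omega
  have h₁₂ : g₁ (wordDist S c 1) = g₂ 0 := h₁n.trans h₂0.symm
  have h₂₃ :
      pathConcat g₁ (wordDist S c 1) g₂ (wordDist S c 1 + wordDist S 1 u) = g₃ 0 := by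
    rw [pathConcat_add h₁₂, h₂n, h₃0]
  subst hp'
  refine ((h₁.isPathOn.pathConcat hS h₂.isPathOn h₁₂).pathConcat hS h₃.isPathOn h₂₃)
    |>.sub_le_wordDist_add hS ?_ hij hj
  have hconj : wordDist S c (u * c) = wordLength S (c⁻¹ * u * c) := by rw [wordDist, mul_assoc]
  rw [pathConcat_add h₂₃, pathConcat_zero, pathConcat_zero, h₁0, h₃n, hconj,
    wordDist_self_mul, hS.wordDist_one_right, wordDist_one_left]
  have := hc.two_mul_wordLength_add_le hS hhyp hδ hu hM
  push_cast
  linarith
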